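/- arXiv:1109.0585 — 2 statements merged into one kernel-verified Lean document; each statement's English description precedes it below -/
import Mathlib

section
/- Let n ≥ 1 and let C ⊆ ℝ^{n+1} be a sharp convex cone. Let G be a subgroup of GL(n+1,ℝ) each of whose elements preserves C, and suppose G is compact as a subset of the space of matrices. Then G fixes a point of Ω: there exists v ∈ C such that for every g ∈ G there is a real λ > 0 with g·v = λ·v. -/
open Matrix Polynomial
open scoped Pointwise

/-- `C ⊆ ℝ^{n+1}` is a sharp convex cone: nonempty, open, convex, invariant under
positive scaling, and its closure contains no line through the origin. -/
def IsSharpConvexCone (n : ℕ) (C : Set (Fin (n + 1) → ℝ)) : Prop :=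
  C.Nonempty ∧ IsOpen C ∧ Convex ℝ C ∧
    (∀ t : ℝ, 0 < t → t • C = C) ∧
    closure C ∩ (-(closure C)) = {0}

/-- A sharp convex cone is strictly convex if the sum of any two nonzero frontier
vectors lying on different rays belongs to the open cone (∂Ω contains no segment). -/
def IsStrictlyConvexCone (n : ℕ) (C : Set (Fin (n + 1) → ℝ)) : Prop :=
  IsSharpConvexCone n C ∧
    ∀ x y : Fin (n + 1) → ℝ, x ∈ frontier C → y ∈ frontier C → x ≠ 0 → y ≠ 0 →
      (¬ ∃ t : ℝ, 0 < t ∧ y = t • x) → x + y ∈ C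

/-- The matrix `A` preserves the cone `C`. -/
def PreservesCone (n : ℕ) (A : Matrix (Fin (n + 1)) (Fin (n + 1)) ℝ)
    (C : Set (Fin (n + 1) → ℝ)) : Prop :=
  A.mulVec '' C = C

/-- The multiset of complex eigenvalues (roots of the characteristic polynomial
over `ℂ`, with multiplicity) of a real square matrix. -/
noncomputable def cEigenvalues (n : ℕ) (A : Matrix (Fin (n + 1)) (Fin (n + 1)) ℝ) :
    Multiset ℂ :=
  ((A.charpoly).map (algebraMap ℝ ℂ)).roots

/-- A compact group of projective automorphisms of a properly convex domain fixes a
point of the domain: there is a common eigenray inside the open cone. -/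
theorem compact_group_fixes_interior_point
    (n : ℕ) (hn : 1 ≤ n) (C : Set (Fin (n + 1) → ℝ)) (hC : IsSharpConvexCone n C)
    (G : Subgroup (GL (Fin (n + 1)) ℝ))
    (hpres : ∀ g ∈ G, PreservesCone n (↑g) C)
    (hcpt : IsCompact ((fun g : GL (Fin (n + 1)) ℝ =>
      (g : Matrix (Fin (n + 1)) (Fin (n + 1)) ℝ)) '' (G : Set (GL (Fin (n + 1)) ℝ)))) :
    ∃ v ∈ C, ∀ g ∈ G, ∃ l : ℝ, 0 < l ∧
      (g : Matrix (Fin (n + 1)) (Fin (n + 1)) ℝ).mulVec v = l • v := by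
  classical
  obtain ⟨⟨v₀, hv₀⟩, hopen, hconv, hscale, hsharp⟩ := hC
  set K : Set (Matrix (Fin (n + 1)) (Fin (n + 1)) ℝ) :=
    (fun g : GL (Fin (n + 1)) ℝ => (g : Matrix (Fin (n + 1)) (Fin (n + 1)) ℝ)) ''
      (G : Set (GL (Fin (n + 1)) ℝ)) with hKdef
  -- `G` is a compact subset of `GL`
  have hGc : IsCompact (G : Set (GL (Fin (n + 1)) ℝ)) := by
    rw [Units.isEmbedding_embedProduct.isCompact_iff]
    have himg : Units.embedProduct _ '' (G : Set (GL (Fin (n + 1)) ℝ)) =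
        (fun A : Matrix (Fin (n + 1)) (Fin (n + 1)) ℝ => (A, MulOpposite.op A⁻¹)) '' K := by
      ext p
      constructor
      · rintro ⟨g, hg, rfl⟩
        exact ⟨(g : Matrix (Fin (n + 1)) (Fin (n + 1)) ℝ), ⟨g, hg, rfl⟩, by
          simp [Units.embedProduct, Matrix.coe_units_inv]⟩
      · rintro ⟨A, ⟨g, hg, rfl⟩, rfl⟩
        exact ⟨g, hg, by simp [Units.embedProduct, Matrix.coe_units_inv]⟩
    rw [himg]
    apply hcpt.image_of_continuousOn
    apply ContinuousOn.prodMk continuousOn_id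
    apply MulOpposite.continuous_op.comp_continuousOn
    intro A hA
    apply (continuousAt_matrix_inv A ?_).continuousWithinAt
    rw [Ring.inverse_eq_inv']
    apply continuousAt_inv₀
    obtain ⟨g, hg, rfl⟩ := hA
    exact ((Matrix.isUnit_iff_isUnit_det _).mp g.isUnit).ne_zero
  haveI : CompactSpace ↥G := isCompact_iff_compactSpace.mp hGc
  haveI : Nonempty ↥G := ⟨1⟩
  letI : MeasurableSpace ↥G := borel _
  haveI : BorelSpace ↥G := ⟨rfl⟩
  set μ : MeasureTheory.Measure ↥G :=
    MeasureTheory.Measure.haarMeasure (⊤ : TopologicalSpace.PositiveCompacts ↥G) with hμdef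
  haveI : MeasureTheory.IsProbabilityMeasure μ := ⟨by
    rw [← TopologicalSpace.PositiveCompacts.coe_top (α := ↥G)]
    exact MeasureTheory.Measure.haarMeasure_self⟩
  -- the function to average
  set f : ↥G → (Fin (n + 1) → ℝ) := fun g =>
    ((g : GL (Fin (n + 1)) ℝ) : Matrix (Fin (n + 1)) (Fin (n + 1)) ℝ).mulVec v₀ with hfdef
  have hfc : Continuous f := by
    exact Continuous.matrix_mulVec (Units.continuous_val.comp continuous_subtype_val)
      continuous_const
  have hfint : MeasureTheory.Integrable f μ :=
    hfc.integrable_of_hasCompactSupport (HasCompactSupport.of_compactSpace f)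
  set v : Fin (n + 1) → ℝ := ∫ g, f g ∂μ with hvdef
  -- the orbit of `v₀`
  set O : Set (Fin (n + 1) → ℝ) :=
    (fun A : Matrix (Fin (n + 1)) (Fin (n + 1)) ℝ => A.mulVec v₀) '' K with hOdef
  have hOc : IsCompact O :=
    hcpt.image (Continuous.matrix_mulVec continuous_id continuous_const)
  have hOC : O ⊆ C := by
    rintro x ⟨A, ⟨g, hg, rfl⟩, rfl⟩
    have := hpres g hg
    rw [PreservesCone] at this
    rw [← this]
    exact ⟨v₀, hv₀, rfl⟩
  obtain ⟨δ, hδ, hthick⟩ := hOc.exists_thickening_subset_open hopen hOC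
  -- the closed convex hull of the orbit lies inside `C`
  have hsC : closure (convexHull ℝ O) ⊆ C := by
    intro x hx
    have hx' : x ∈ Metric.thickening δ (convexHull ℝ O) :=
      Metric.closure_subset_thickening hδ _ hx
    obtain ⟨y, hy, hxy⟩ := Metric.mem_thickening_iff.mp hx'
    have hb : x = (x - y) +ᵥ y := by simp
    have hmem : x ∈ (x - y) +ᵥ convexHull ℝ O := ⟨y, hy, by simp⟩
    rw [← convexHull_vadd] at hmem
    have hsub : ((x - y) +ᵥ O : Set (Fin (n + 1) → ℝ)) ⊆ C := by
      rintro z ⟨o, ho, rfl⟩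
      apply hthick
      rw [Metric.mem_thickening_iff]
      refine ⟨o, ho, ?_⟩
      have : dist ((x - y) +ᵥ o) o = dist x y := by
        simp only [vadd_eq_add, dist_eq_norm]
        abel_nf
      rw [this]
      exact hxy
    exact convexHull_min hsub hconv hmem
  have hvmem : v ∈ closure (convexHull ℝ O) := by
    apply (convex_convexHull ℝ O).closure.integral_mem isClosed_closure
    · exact MeasureTheory.ae_of_all _ fun g =>
        subset_closure (subset_convexHull ℝ O ⟨_, ⟨(g : GL (Fin (n + 1)) ℝ), g.2, rfl⟩, rfl⟩)
    · exact hfint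
  refine ⟨v, hsC hvmem, ?_⟩
  intro g hg
  refine ⟨1, one_pos, ?_⟩
  rw [one_smul]
  set L : (Fin (n + 1) → ℝ) →L[ℝ] (Fin (n + 1) → ℝ) :=
    LinearMap.toContinuousLinearMap
      (Matrix.mulVecLin (g : Matrix (Fin (n + 1)) (Fin (n + 1)) ℝ)) with hLdef
  have hLv : (g : Matrix (Fin (n + 1)) (Fin (n + 1)) ℝ).mulVec v = L v := rfl
  rw [hLv, hvdef, ← L.integral_comp_comm hfint]
  have hkey : ∀ x : ↥G, L (f x) = f ((⟨g, hg⟩ : ↥G) * x) := by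
    intro x
    show (g : Matrix (Fin (n + 1)) (Fin (n + 1)) ℝ).mulVec
        (((x : GL (Fin (n + 1)) ℝ) : Matrix (Fin (n + 1)) (Fin (n + 1)) ℝ).mulVec v₀) = _
    rw [Matrix.mulVec_mulVec]
    simp [hfdef, Units.val_mul]
  simp_rw [hkey]
  rw [MeasureTheory.integral_mul_left_eq_self f ((⟨g, hg⟩ : ↥G))]
end

section
/- Let n ≥ 1, let C ⊆ ℝ^{n+1} be a strictly convex sharp convex cone, and let A ∈ GL(n+1,ℝ) be parabolic for C: A preserves C, no v ∈ C satisfies A·v = λ·v with λ > 0, and every complex eigenvalue of A has modulus 1. Then A fixes exactly one boundary ray: there exists a nonzero vector v in the frontier of C with A·v = v, and every nonzero w in the frontier of C satisfying A·w = μ·w for some μ > 0 is a positive scalar multiple of v. -/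
open Matrix Polynomial
open scoped Pointwise

/-!
Fix `u ∈ C` and a functional `φ` with `c ‖x‖ ≤ φ x` on `closure C` (it exists because
`closure C` is a salient closed cone). Since all eigenvalues of `A` have modulus one, the Abel
sums `y r = ∑ rᵏ Aᵏ u` converge for `r < 1`; they lie in `closure C` and satisfy
`r A y r = y r - u`. The series `∑ φ (Aᵏ u)` diverges, for otherwise `Aᵏ u → 0`, hence (as `C`
is open) `Aᵏ → 0`, which an eigenvalue of modulus one forbids. Thus `φ (y r) → ∞` as `r → 1⁻`,
and a cluster point of `y r / φ (y r)` is a nonzero fixed vector of `A` in `closure C`; it is not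
in `C` because `A` fixes no ray of `C`. A boundary eigenvector `w` with positive eigenvalue has
eigenvalue `1`, and if `w` were not on the ray of `v`, strict convexity would make `v + w` a
fixed vector inside `C`.
-/

open Filter Set Topology

namespace ProperCone

variable {E : Type*} [NormedAddCommGroup E] [NormedSpace ℝ E]

lemma exists_dual_pos_of_isCompact (K : ProperCone ℝ E) {S : Set E} (hS : IsCompact S)
    (hSK : S ⊆ K) (hneg : ∀ z ∈ S, -z ∉ K) :
    ∃ φ : StrongDual ℝ E, (∀ x ∈ K, 0 ≤ φ x) ∧ ∀ z ∈ S, 0 < φ z := by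
  have hsep (z : S) : ∃ f : StrongDual ℝ E, (∀ x ∈ K, 0 ≤ f x) ∧ 0 < f z := by
    obtain ⟨f, hfK, hfz⟩ := K.hyperplane_separation_point (hneg z z.2)
    exact ⟨f, hfK, by simpa using hfz⟩
  choose f hfK hfS using hsep
  obtain ⟨t, ht⟩ := hS.elim_finite_subcover (fun z : S => {y | 0 < f z y})
    (fun z => isOpen_lt continuous_const (f z).continuous) fun z hz => mem_iUnion.2 ⟨⟨z, hz⟩, hfS _⟩
  refine ⟨∑ z ∈ t, f z, fun x hx => ?_, fun y hy => ?_⟩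
  · simpa using Finset.sum_nonneg fun z _ => hfK z x hx
  · obtain ⟨z, hzt, hzy⟩ := mem_iUnion₂.1 (ht hy)
    simpa using Finset.sum_pos' (fun i _ => hfK i y (hSK hy)) ⟨z, hzt, hzy⟩

lemma exists_dual_mul_norm_le [FiniteDimensional ℝ E] (K : ProperCone ℝ E)
    (hK : ∀ x ∈ K, -x ∈ K → x = 0) :
    ∃ (φ : StrongDual ℝ E) (c : ℝ), 0 < c ∧ ∀ x ∈ K, c * ‖x‖ ≤ φ x := by
  set S : Set E := K ∩ Metric.sphere 0 1
  have hS : IsCompact S := (isCompact_sphere 0 1).inter_left K.isClosed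
  obtain ⟨φ, hφK, hφS⟩ := K.exists_dual_pos_of_isCompact hS inter_subset_left fun z hz hz' => by
    simpa [hK z hz.1 hz'] using hz.2
  obtain ⟨c, hc, hcS⟩ := hS.exists_forall_le' φ.continuous.continuousOn hφS
  refine ⟨φ, c, hc, fun x hx => ?_⟩
  rcases eq_or_ne x 0 with rfl | hx0
  · simp
  have hxS : ‖x‖⁻¹ • x ∈ S := ⟨K.smul_mem hx (by positivity), by simp [norm_smul, hx0]⟩
  have := hcS _ hxS
  rw [map_smul, smul_eq_mul, le_inv_mul_iff₀ (norm_pos_iff.2 hx0)] at this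
  linarith

end ProperCone

namespace IsSharpConvexCone

variable {n : ℕ} {C : Set (Fin (n + 1) → ℝ)}

lemma smul_mem (hC : IsSharpConvexCone n C) {x : Fin (n + 1) → ℝ} (hx : x ∈ C) {t : ℝ}
    (ht : 0 < t) : t • x ∈ C :=
  hC.2.2.2.1 t ht ▸ smul_mem_smul_set hx

lemma add_mem (hC : IsSharpConvexCone n C) {x y : Fin (n + 1) → ℝ} (hx : x ∈ C) (hy : y ∈ C) :
    x + y ∈ C := by
  have hmid := hC.2.2.1 hx hy (by norm_num : (0 : ℝ) ≤ 1 / 2) (by norm_num : (0 : ℝ) ≤ 1 / 2)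
    (by norm_num)
  have := hC.smul_mem hmid two_pos
  rwa [smul_add, smul_smul, smul_smul, mul_one_div_cancel two_ne_zero, one_smul, one_smul] at this

def toConvexCone (hC : IsSharpConvexCone n C) : ConvexCone ℝ (Fin (n + 1) → ℝ) where
  carrier := C
  smul_mem' _ ht _ hx := hC.smul_mem hx ht
  add_mem' _ hx _ hy := hC.add_mem hx hy

lemma zero_mem_closure (hC : IsSharpConvexCone n C) : (0 : Fin (n + 1) → ℝ) ∈ closure C :=
  (hC.2.2.2.2.symm.subset rfl).1

def closureCone (hC : IsSharpConvexCone n C) : ProperCone ℝ (Fin (n + 1) → ℝ) where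
  toSubmodule := hC.toConvexCone.closure.toPointedCone hC.zero_mem_closure
  isClosed' := isClosed_closure

lemma eq_zero_of_mem_closure_of_neg_mem_closure (hC : IsSharpConvexCone n C)
    {x : Fin (n + 1) → ℝ} (hx : x ∈ closure C) (hx' : -x ∈ closure C) : x = 0 :=
  hC.2.2.2.2.subset ⟨hx, by simpa using hx'⟩

lemma exists_dual_mul_norm_le (hC : IsSharpConvexCone n C) :
    ∃ (φ : StrongDual ℝ (Fin (n + 1) → ℝ)) (c : ℝ), 0 < c ∧ ∀ x ∈ closure C, c * ‖x‖ ≤ φ x :=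
  hC.closureCone.exists_dual_mul_norm_le fun _ hx hx' =>
    hC.eq_zero_of_mem_closure_of_neg_mem_closure hx hx'

end IsSharpConvexCone

section Eigenvalues

variable {n : ℕ} (M : Matrix (Fin (n + 1)) (Fin (n + 1)) ℝ)

lemma mem_cEigenvalues_iff {z : ℂ} :
    z ∈ cEigenvalues n M ↔ z ∈ spectrum ℂ (M.map (algebraMap ℝ ℂ)) := by
  rw [cEigenvalues, mem_roots (M.charpoly_monic.map _).ne_zero, ← M.charpoly_map,
    Matrix.mem_spectrum_iff_isRoot_charpoly]

lemma ofReal_mem_cEigenvalues {μ : ℝ} {w : Fin (n + 1) → ℝ} (hw : w ≠ 0) (h : M *ᵥ w = μ • w) :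
    (μ : ℂ) ∈ cEigenvalues n M := by
  have hvec : Module.End.HasEigenvector (Matrix.toLin' M) μ w :=
    Module.End.hasEigenvector_iff.2 ⟨by simpa [Module.End.mem_eigenspace_iff] using h, hw⟩
  have hμ : μ ∈ spectrum ℝ M :=
    M.spectrum_toLin' ▸ (Module.End.hasEigenvalue_of_hasEigenvector hvec).mem_spectrum
  rw [cEigenvalues, mem_roots (M.charpoly_monic.map _).ne_zero]
  exact (Matrix.mem_spectrum_iff_isRoot_charpoly.1 hμ).map

lemma spectralRadius_map_le_one_of_cEigenvalues (hM : ∀ z ∈ cEigenvalues n M, ‖z‖ = 1) :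
    spectralRadius ℂ (M.map (algebraMap ℝ ℂ)) ≤ 1 :=
  iSup₂_le fun z hz => by
    simpa [← NNReal.coe_le_one] using (hM z ((mem_cEigenvalues_iff M).2 hz)).le

lemma eq_one_of_mulVec_eq_smul (hM : ∀ z ∈ cEigenvalues n M, ‖z‖ = 1) {μ : ℝ} (hμ : 0 < μ)
    {w : Fin (n + 1) → ℝ} (hw : w ≠ 0) (h : M *ᵥ w = μ • w) : μ = 1 := by
  simpa [abs_of_pos hμ] using hM _ (ofReal_mem_cEigenvalues M hw h)

end Eigenvalues

lemma spectrum.not_tendsto_pow_zero {A : Type*} [NormedRing A] [NormedAlgebra ℂ A] [CompleteSpace A]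
    [NormOneClass A] {a : A} {z : ℂ} (hz : z ∈ spectrum ℂ a) (h1 : 1 ≤ ‖z‖) :
    ¬ Tendsto (fun k => a ^ k) atTop (𝓝 0) := fun h => by
  obtain ⟨k, hk⟩ := (h.norm.eventually (gt_mem_nhds (by norm_num : ‖(0 : A)‖ < 1))).exists
  have := spectrum.norm_le_norm_of_mem (spectrum.pow_mem_pow a k hz)
  rw [norm_pow] at this
  linarith [one_le_pow₀ (n := k) h1]

lemma Matrix.tendsto_pow_zero_of_forall_tendsto_pow_mulVec {ι : Type*} [Fintype ι] [DecidableEq ι]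
    (M : Matrix ι ι ℝ) (h : ∀ x, Tendsto (fun k => (M ^ k) *ᵥ x) atTop (𝓝 0)) :
    Tendsto (fun k => M ^ k) atTop (𝓝 0) :=
  tendsto_pi_nhds.2 fun i => tendsto_pi_nhds.2 fun j => by
    simpa [Matrix.mulVec_single_one] using tendsto_pi_nhds.1 (h (Pi.single j 1)) i

lemma eventually_norm_pow_le_of_spectralRadius_lt {A : Type*} [NormedRing A] [NormedAlgebra ℂ A]
    [CompleteSpace A] (a : A) {q : ℝ} (hq : spectralRadius ℂ a < ENNReal.ofReal q) :
    ∀ᶠ k in atTop, ‖a ^ k‖ ≤ q ^ k := by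
  have hq0 : 0 < q := ENNReal.ofReal_pos.1 (bot_le.trans_lt hq)
  filter_upwards [(spectrum.pow_norm_pow_one_div_tendsto_nhds_spectralRadius a).eventually_lt_const
    hq, eventually_ge_atTop 1] with k hk hk1
  rw [ENNReal.ofReal_lt_ofReal_iff hq0, one_div, Real.rpow_inv_lt_iff_of_pos (norm_nonneg _) hq0.le
    (by positivity), Real.rpow_natCast] at hk
  exact hk.le

section LinftyOpNorm

attribute [local instance] Matrix.linftyOpNormedRing Matrix.linftyOpNormedAlgebra

variable {ι : Type*} [Fintype ι] [DecidableEq ι]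

lemma Matrix.linfty_opNorm_map_ofReal (A : Matrix ι ι ℝ) : ‖A.map (algebraMap ℝ ℂ)‖ = ‖A‖ := by
  simp [Matrix.linfty_opNorm_def]

lemma summable_pow_smul_pow_mulVec (M : Matrix ι ι ℝ)
    (hM : spectralRadius ℂ (M.map (algebraMap ℝ ℂ)) ≤ 1) {r : ℝ} (hr0 : 0 ≤ r) (hr1 : r < 1)
    (x : ι → ℝ) : Summable fun k => r ^ k • (M ^ k) *ᵥ x := by
  set q := 2 / (1 + r)
  have hq1 : 1 < q := by rw [lt_div_iff₀ (by positivity)]; linarith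
  have hrq : r * q < 1 := by rw [mul_div_assoc', div_lt_one (by positivity)]; linarith
  have hρ : spectralRadius ℂ (M.map (algebraMap ℝ ℂ)) < ENNReal.ofReal q :=
    hM.trans_lt (by simpa using hq1)
  refine Summable.of_norm_bounded_eventually_nat
    ((summable_geometric_of_lt_one (by positivity) hrq).mul_right ‖x‖) ?_
  filter_upwards [eventually_norm_pow_le_of_spectralRadius_lt _ hρ] with k hk
  rw [← Matrix.map_pow, Matrix.linfty_opNorm_map_ofReal] at hk
  calc ‖r ^ k • (M ^ k) *ᵥ x‖ = r ^ k * ‖(M ^ k) *ᵥ x‖ := by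
        rw [norm_smul, Real.norm_of_nonneg (by positivity)]
    _ ≤ r ^ k * (q ^ k * ‖x‖) := by
        gcongr
        exact (Matrix.linfty_opNorm_mulVec _ _).trans (by gcongr)
    _ = (r * q) ^ k * ‖x‖ := by ring

lemma not_forall_tendsto_pow_mulVec_zero {n : ℕ} (M : Matrix (Fin (n + 1)) (Fin (n + 1)) ℝ)
    (hM : ∀ z ∈ cEigenvalues n M, ‖z‖ = 1) :
    ¬ ∀ x, Tendsto (fun k => (M ^ k) *ᵥ x) atTop (𝓝 0) := fun h => by
  obtain ⟨z, hz⟩ := spectrum.nonempty (M.map (algebraMap ℝ ℂ))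
  refine spectrum.not_tendsto_pow_zero hz (hM z ((mem_cEigenvalues_iff M).2 hz)).ge ?_
  have hmap : Continuous fun A : Matrix (Fin (n + 1)) (Fin (n + 1)) ℝ => A.map (algebraMap ℝ ℂ) :=
    continuous_id.matrix_map Complex.continuous_ofReal
  have := (hmap.tendsto 0).comp (M.tendsto_pow_zero_of_forall_tendsto_pow_mulVec h)
  simp only [Function.comp_def, Matrix.map_pow, Matrix.map_zero _ (map_zero _)] at this
  exact this

end LinftyOpNorm

lemma tendsto_tsum_pow_mul_atTop_of_not_summable {a : ℕ → ℝ} (ha : ∀ k, 0 ≤ a k)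
    (hdiv : ¬ Summable a) (hsum : ∀ r ∈ Ioo (0 : ℝ) 1, Summable fun k => r ^ k * a k) :
    Tendsto (fun r => ∑' k, r ^ k * a k) (𝓝[<] 1) atTop := by
  refine tendsto_atTop.2 fun B => ?_
  obtain ⟨N, hN⟩ :=
    (((not_summable_iff_tendsto_nat_atTop_of_nonneg ha).1 hdiv).eventually_gt_atTop B).exists
  have hpartial : Tendsto (fun r : ℝ => ∑ k ∈ Finset.range N, r ^ k * a k) (𝓝[<] 1)
      (𝓝 (∑ k ∈ Finset.range N, a k)) := by
    have : Continuous fun r : ℝ => ∑ k ∈ Finset.range N, r ^ k * a k := by fun_prop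
    simpa using (this.tendsto 1).mono_left nhdsWithin_le_nhds
  filter_upwards [hpartial.eventually (lt_mem_nhds hN), Ioo_mem_nhdsLT one_pos] with r hr hr01
  exact hr.le.trans <| (hsum r hr01).sum_le_tsum _ fun k _ =>
    mul_nonneg (pow_nonneg hr01.1.le k) (ha k)

lemma IsCompact.exists_eq_of_tendsto_comp {ι X Y : Type*} [TopologicalSpace X] [TopologicalSpace Y]
    [T2Space Y] {K : Set X} (hK : IsCompact K) {l : Filter ι} [l.NeBot] {g : ι → X}
    (hg : ∀ᶠ i in l, g i ∈ K) {f : X → Y} (hf : Continuous f) {y : Y}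
    (h : Tendsto (f ∘ g) l (𝓝 y)) : ∃ x ∈ K, f x = y := by
  obtain ⟨x, hxK, hx⟩ := hK.exists_mapClusterPt (le_principal_iff.2 hg)
  exact ⟨x, hxK, eq_of_nhds_neBot ((hx.continuousAt_comp hf.continuousAt).clusterPt.mono h)⟩

lemma tendsto_zero_of_sub_mem_of_tendsto_dual {ι E : Type*} [NormedAddCommGroup E]
    [NormedSpace ℝ E] {K : Set E} {φ : StrongDual ℝ E} {c : ℝ} (hc : 0 < c)
    (hφ : ∀ x ∈ K, c * ‖x‖ ≤ φ x) {l : Filter ι}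
    {y z : ι → E} (hy : ∀ i, y i ∈ K) (hzy : ∀ i, z i - y i ∈ K)
    (hz : Tendsto (fun i => φ (z i)) l (𝓝 0)) : Tendsto y l (𝓝 0) := by
  refine squeeze_zero_norm (fun i => ?_) (by simpa using hz.div_const c)
  have h₁ := hφ _ (hy i)
  have h₂ := hφ _ (hzy i)
  rw [map_sub] at h₂
  rw [le_div_iff₀ hc]
  nlinarith [norm_nonneg (z i - y i)]

lemma Matrix.smul_mulVec_tsum_pow_smul {ι : Type*} [Fintype ι] [DecidableEq ι]
    (M : Matrix ι ι ℝ) {r : ℝ} {x : ι → ℝ} (hs : Summable fun k => r ^ k • (M ^ k) *ᵥ x) :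
    r • (M *ᵥ ∑' k, r ^ k • (M ^ k) *ᵥ x) = ∑' k, r ^ k • (M ^ k) *ᵥ x - x := by
  have hmap := hs.hasSum.mapL (r • LinearMap.toContinuousLinearMap (Matrix.mulVecLin M))
  have hshift := (hasSum_nat_add_iff' 1).2 hs.hasSum
  simp only [Finset.range_one, Finset.sum_singleton, pow_zero, one_smul, Matrix.one_mulVec]
    at hshift
  refine hmap.unique (hshift.congr_fun fun k => ?_)
  simp [pow_succ', Matrix.mulVec_mulVec, smul_smul, mul_comm _ r]

lemma Set.MapsTo.pow_mulVec {ι R : Type*} [Fintype ι] [DecidableEq ι] [CommSemiring R]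
    {M : Matrix ι ι R} {S : Set (ι → R)} (h : MapsTo (M *ᵥ ·) S S) (k : ℕ) :
    MapsTo ((M ^ k) *ᵥ ·) S S := by
  induction k with
  | zero => exact fun x hx => by simpa using hx
  | succ k ih => exact fun x hx => by simpa [pow_succ', ← Matrix.mulVec_mulVec] using h (ih hx)

namespace IsSharpConvexCone

variable {n : ℕ} {C : Set (Fin (n + 1) → ℝ)} {M : Matrix (Fin (n + 1)) (Fin (n + 1)) ℝ}
  {φ : StrongDual ℝ (Fin (n + 1) → ℝ)} {c : ℝ}

lemma tendsto_pow_mulVec_zero (hC : IsSharpConvexCone n C) (hc : 0 < c)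
    (hφ : ∀ x ∈ closure C, c * ‖x‖ ≤ φ x) (hMC : MapsTo (M *ᵥ ·) C C) {u : Fin (n + 1) → ℝ}
    (hu : u ∈ C) (h : Tendsto (fun k => φ ((M ^ k) *ᵥ u)) atTop (𝓝 0)) (x : Fin (n + 1) → ℝ) :
    Tendsto (fun k => (M ^ k) *ᵥ x) atTop (𝓝 0) := by
  have hline (s : ℝ) : ∀ᶠ ε in 𝓝 (0 : ℝ), u + (s * ε) • x ∈ C :=
    (Continuous.tendsto' (f := fun ε : ℝ => u + (s * ε) • x) (by fun_prop) 0 u (by simp)).eventually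
      (hC.2.1.mem_nhds hu)
  obtain ⟨ε, ⟨hplus, hminus⟩, hε⟩ := (((hline 1).and (hline (-1))).filter_mono nhdsWithin_le_nhds
    |>.and self_mem_nhdsWithin).exists (f := 𝓝[>] 0)
  simp only [one_mul, neg_mul, neg_smul, ← sub_eq_add_neg] at hplus hminus
  have horbit : Tendsto (fun k => (M ^ k) *ᵥ u) atTop (𝓝 0) :=
    tendsto_zero_of_sub_mem_of_tendsto_dual hc hφ (fun k => subset_closure (hMC.pow_mulVec k hu))
      (fun k => by simpa using hC.zero_mem_closure) h
  have hplus_orbit : Tendsto (fun k => (M ^ k) *ᵥ (u + ε • x)) atTop (𝓝 0) := by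
    refine tendsto_zero_of_sub_mem_of_tendsto_dual hc hφ (z := fun k => (2 : ℝ) • (M ^ k) *ᵥ u)
      (fun k => subset_closure (hMC.pow_mulVec k hplus)) (fun k => ?_)
      (by simpa using h.const_mul 2)
    convert subset_closure (hMC.pow_mulVec k hminus) using 1
    simp only [Matrix.mulVec_add, Matrix.mulVec_sub]
    module
  convert (hplus_orbit.sub horbit).const_smul ε⁻¹ using 2 with k
  · simp [Matrix.mulVec_add, Matrix.mulVec_smul, smul_smul, inv_mul_cancel₀ hε.ne']
  · simp

lemma tendsto_dual_tsum_pow_smul_atTop (hC : IsSharpConvexCone n C) (hc : 0 < c)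
    (hφ : ∀ x ∈ closure C, c * ‖x‖ ≤ φ x) (hMC : MapsTo (M *ᵥ ·) C C)
    (hM : ∀ z ∈ cEigenvalues n M, ‖z‖ = 1) {u : Fin (n + 1) → ℝ} (hu : u ∈ C) :
    Tendsto (fun r : ℝ => φ (∑' k, r ^ k • (M ^ k) *ᵥ u)) (𝓝[<] 1) atTop := by
  have hsum (r : ℝ) (hr : r ∈ Ioo (0 : ℝ) 1) : Summable fun k => r ^ k • (M ^ k) *ᵥ u :=
    summable_pow_smul_pow_mulVec M (spectralRadius_map_le_one_of_cEigenvalues M hM) hr.1.le hr.2 u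
  have horbit (k : ℕ) : 0 ≤ φ ((M ^ k) *ᵥ u) :=
    (mul_nonneg hc.le (norm_nonneg _)).trans (hφ _ (subset_closure (hMC.pow_mulVec k hu)))
  have hdiv : ¬ Summable fun k => φ ((M ^ k) *ᵥ u) := fun hs =>
    not_forall_tendsto_pow_mulVec_zero M hM
      (hC.tendsto_pow_mulVec_zero hc hφ hMC hu hs.tendsto_atTop_zero)
  refine (tendsto_tsum_pow_mul_atTop_of_not_summable horbit hdiv fun r hr => ?_).congr' ?_
  · simpa using (hsum r hr).mapL φ
  · filter_upwards [Ioo_mem_nhdsLT one_pos] with r hr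
    simp [φ.map_tsum (hsum r hr)]

theorem exists_fixed_mem_closure (hC : IsSharpConvexCone n C) (hMC : MapsTo (M *ᵥ ·) C C)
    (hM : ∀ z ∈ cEigenvalues n M, ‖z‖ = 1) : ∃ v ∈ closure C, v ≠ 0 ∧ M *ᵥ v = v := by
  obtain ⟨φ, c, hc, hφ⟩ := hC.exists_dual_mul_norm_le
  obtain ⟨u, hu⟩ := hC.1
  set y : ℝ → Fin (n + 1) → ℝ := fun r => ∑' k, r ^ k • (M ^ k) *ᵥ u
  set w : ℝ → Fin (n + 1) → ℝ := fun r => (φ (y r))⁻¹ • y r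
  have hφy : Tendsto (fun r => φ (y r)) (𝓝[<] 1) atTop :=
    hC.tendsto_dual_tsum_pow_smul_atTop hc hφ hMC hM hu
  set K := closure C ∩ φ ⁻¹' {1}
  have hK_norm (x : Fin (n + 1) → ℝ) (hx : x ∈ K) : ‖x‖ ≤ c⁻¹ := by
    have := hφ x hx.1
    rwa [show φ x = 1 from hx.2, ← le_div_iff₀' hc, one_div] at this
  have hK : IsCompact K := Metric.isCompact_of_isClosed_isBounded
    (isClosed_closure.inter (isClosed_singleton.preimage φ.continuous))
    (isBounded_iff_forall_norm_le.2 ⟨c⁻¹, hK_norm⟩)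
  have hwK : ∀ᶠ r in 𝓝[<] 1, w r ∈ K := by
    filter_upwards [hφy.eventually_gt_atTop 0, Ioo_mem_nhdsLT one_pos] with r hφr hr
    refine ⟨hC.closureCone.smul_mem ?_ (inv_pos.2 hφr).le, by simp [w, hφr.ne']⟩
    exact tsum_mem hC.closureCone.isClosed fun k =>
      hC.closureCone.smul_mem (subset_closure (hMC.pow_mulVec k hu)) (pow_nonneg hr.1.le k)
  -- `M y = r⁻¹ (y - u)`, so `M w - w → 0` because `r → 1` and `φ (y r) → ∞`.
  have hdefect : ∀ᶠ r in 𝓝[<] 1,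
      (r⁻¹ - 1) • w r - (r⁻¹ * (φ (y r))⁻¹) • u = M *ᵥ w r - w r := by
    filter_upwards [Ioo_mem_nhdsLT one_pos] with r hr
    have hMy : M *ᵥ y r = r⁻¹ • (y r - u) := by
      rw [← M.smul_mulVec_tsum_pow_smul (summable_pow_smul_pow_mulVec M
        (spectralRadius_map_le_one_of_cEigenvalues M hM) hr.1.le hr.2 u),
        smul_smul, inv_mul_cancel₀ hr.1.ne', one_smul]
    simp only [w, Matrix.mulVec_smul, hMy]
    module
  have hinv : Tendsto (fun r : ℝ => r⁻¹ - 1) (𝓝[<] 1) (𝓝 0) := by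
    simpa using ((tendsto_inv₀ one_ne_zero).mono_left nhdsWithin_le_nhds).sub_const (1 : ℝ)
  have hlim : Tendsto (fun r => (r⁻¹ - 1) • w r - (r⁻¹ * (φ (y r))⁻¹) • u) (𝓝[<] 1) (𝓝 0) := by
    have hbdd : IsBoundedUnder (· ≤ ·) (𝓝[<] 1) (norm ∘ w) :=
      isBoundedUnder_of_eventually_le (hwK.mono fun r hr => hK_norm _ hr)
    simpa using (hinv.zero_smul_isBoundedUnder_le hbdd).sub
      (((hinv.add_const 1).mul hφy.inv_tendsto_atTop).smul_const u)
  obtain ⟨v, ⟨hvC, hφv⟩, hv⟩ := hK.exists_eq_of_tendsto_comp hwK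
    (f := fun x => M *ᵥ x - x) (by fun_prop) (hlim.congr' hdefect)
  exact ⟨v, hvC, fun h => by simp [h] at hφv, sub_eq_zero.1 hv⟩

end IsSharpConvexCone

theorem parabolic_fixes_exactly_one_boundary_ray_general
    (n : ℕ) (C : Set (Fin (n + 1) → ℝ)) (hC : IsStrictlyConvexCone n C)
    (A : GL (Fin (n + 1)) ℝ)
    (hpres : PreservesCone n (↑A) C)
    (hne : ¬ ∃ v ∈ C, ∃ l : ℝ, 0 < l ∧
      (A : Matrix (Fin (n + 1)) (Fin (n + 1)) ℝ).mulVec v = l • v)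
    (hpar : ∀ z ∈ cEigenvalues n (↑A), ‖z‖ = 1) :
    ∃ v : Fin (n + 1) → ℝ, v ∈ frontier C ∧ v ≠ 0 ∧
      (A : Matrix (Fin (n + 1)) (Fin (n + 1)) ℝ).mulVec v = v ∧
      ∀ w : Fin (n + 1) → ℝ, w ∈ frontier C → w ≠ 0 →
        (∃ μ : ℝ, 0 < μ ∧
          (A : Matrix (Fin (n + 1)) (Fin (n + 1)) ℝ).mulVec w = μ • w) →
        ∃ t : ℝ, 0 < t ∧ w = t • v := by
  obtain ⟨hC, hstrict⟩ := hC
  have hfixed_notMem {x} (hx : (A : Matrix (Fin (n + 1)) (Fin (n + 1)) ℝ) *ᵥ x = x) : x ∉ C :=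
    fun hxC => hne ⟨x, hxC, 1, one_pos, by rw [hx, one_smul]⟩
  obtain ⟨v, hvC, hv0, hAv⟩ :=
    hC.exists_fixed_mem_closure (fun x hx => hpres ▸ mem_image_of_mem _ hx) hpar
  have hv : v ∈ frontier C := by
    rw [hC.2.1.frontier_eq]
    exact ⟨hvC, hfixed_notMem hAv⟩
  refine ⟨v, hv, hv0, hAv, fun w hw hw0 ⟨μ, hμ, hAw⟩ => ?_⟩
  rw [eq_one_of_mulVec_eq_smul _ hpar hμ hw0 hAw, one_smul] at hAw
  by_contra hvw
  exact hfixed_notMem (by rw [Matrix.mulVec_add, hAv, hAw]) (hstrict v w hv hw hv0 hw0 hvw)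

/-- A parabolic automorphism of a strictly convex cone fixes exactly one boundary ray,
with eigenvalue 1. -/
theorem parabolic_fixes_exactly_one_boundary_ray
    (n : ℕ) (hn : 1 ≤ n) (C : Set (Fin (n + 1) → ℝ)) (hC : IsStrictlyConvexCone n C)
    (A : GL (Fin (n + 1)) ℝ)
    (hpres : PreservesCone n (↑A) C)
    (hne : ¬ ∃ v ∈ C, ∃ l : ℝ, 0 < l ∧
      (A : Matrix (Fin (n + 1)) (Fin (n + 1)) ℝ).mulVec v = l • v)
    (hpar : ∀ z ∈ cEigenvalues n (↑A), ‖z‖ = 1) :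
    ∃ v : Fin (n + 1) → ℝ, v ∈ frontier C ∧ v ≠ 0 ∧
      (A : Matrix (Fin (n + 1)) (Fin (n + 1)) ℝ).mulVec v = v ∧
      ∀ w : Fin (n + 1) → ℝ, w ∈ frontier C → w ≠ 0 →
        (∃ μ : ℝ, 0 < μ ∧
          (A : Matrix (Fin (n + 1)) (Fin (n + 1)) ℝ).mulVec w = μ • w) →
        ∃ t : ℝ, 0 < t ∧ w = t • v :=
  parabolic_fixes_exactly_one_boundary_ray_general n C hC A hpres hne hpar
end
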